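/- Let p ∈ (0,1) be a real number and n ≥ 1 a natural number. Then the expected maximum speedup E[S] = E[T_1] / E[T_p], where E[T_1] = n · p and E[T_p] = Σ_{j=1}^{n-1} j · p^j · (1 − p) + n · p^n, satisfies E[S] = n · (1 − p) / (1 − p^n). -/
import Mathlib

lemma key_sum (p : ℝ) : ∀ n : ℕ,
    (∑ j ∈ Finset.Icc 1 n, (j : ℝ) * p ^ j * (1 - p)) + ((n : ℝ) + 1) * p ^ (n + 1)
      = ∑ j ∈ Finset.Icc 1 (n + 1), p ^ j := by
  intro n
  induction n with
  | zero => simp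
  | succ m ih =>
    rw [Finset.sum_Icc_succ_top (by omega : 1 ≤ m + 1),
        Finset.sum_Icc_succ_top (by omega : 1 ≤ m + 1 + 1)]
    rw [← ih]
    push_cast
    ring

lemma geom (p : ℝ) (n : ℕ) :
    (∑ j ∈ Finset.Icc 1 n, p ^ j) * (1 - p) = p * (1 - p ^ n) := by
  induction n with
  | zero => simp
  | succ m ih =>
    rw [Finset.sum_Icc_succ_top (by omega : 1 ≤ m + 1), add_mul, ih]
    ring

/-- Paper's Corollary 1: for `p ∈ (0,1)` and `n ≥ 1`, the expected maximum speedup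
`E[S] = E[T_1] / E[T_p]` with `E[T_1] = n·p` and
`E[T_p] = Σ_{j=1}^{n-1} j · p^j · (1 − p) + n · p^n` satisfies
`E[S] = n·(1 − p)/(1 − p^n)`. -/
theorem expected_max_speedup (p : ℝ) (hp : p ∈ Set.Ioo (0 : ℝ) 1) (n : ℕ) (hn : 1 ≤ n) :
    ((n : ℝ) * p) /
        ((∑ j ∈ Finset.Icc 1 (n - 1), (j : ℝ) * p ^ j * (1 - p)) + (n : ℝ) * p ^ n)
      = (n : ℝ) * (1 - p) / (1 - p ^ n) := by
  obtain ⟨hp0, hp1⟩ := hp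
  obtain ⟨m, rfl⟩ := Nat.exists_eq_add_of_le hn
  have hD : (∑ j ∈ Finset.Icc 1 (1 + m - 1), (j : ℝ) * p ^ j * (1 - p)) + ((1 + m : ℕ) : ℝ) * p ^ (1 + m)
      = ∑ j ∈ Finset.Icc 1 (1 + m), p ^ j := by
    have := key_sum p m
    simpa [Nat.add_comm 1 m, add_comm (1:ℝ) (m:ℝ)] using this
  rw [hD]
  have hpn : p ^ (1 + m) < 1 := pow_lt_one₀ hp0.le hp1 (by omega)
  have hne : (1 : ℝ) - p ^ (1 + m) ≠ 0 := by linarith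
  have hSum : (∑ j ∈ Finset.Icc 1 (1 + m), p ^ j) = p * (1 - p ^ (1 + m)) / (1 - p) := by
    rw [eq_div_iff (by linarith : (1:ℝ) - p ≠ 0)]
    exact geom p (1 + m)
  rw [hSum]
  field_simp
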